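/- arXiv:2603.02768 — 2 statements merged into one kernel-verified Lean document; each statement's English description precedes it below -/
import Mathlib

section
/- Let D_{(k)} denote the submatrix consisting of the first k columns of an L×K Vandermonde matrix D with D[l,j] = δ_l^{j-1}, and suppose D = QR with Q orthogonal and R upper triangular with diagonal entries r_1,...,r_K. Then for 1 < k ≤ K, r_k² · det(D_{(k-1)}ᵀ D_{(k-1)}) = det(D_{(k)}ᵀ D_{(k)}); consequently, if det(D_{(k-1)}ᵀ D_{(k-1)}) ≠ 0, then r_k² = [Σ over k-subsets C of ∏_{i<j∈C}(δ_j−δ_i)²] / [Σ over (k−1)-subsets C' of ∏_{i<j∈C'}(δ_j−δ_i)²]. -/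
open Finset

open Equiv Equiv.Perm Matrix


lemma gram_expand {L m : ℕ} (A : Matrix (Fin L) (Fin m) ℝ) :
    (Aᵀ * A).det = ∑ p : Fin m → Fin L, (∏ i, A (p i) i) * (A.submatrix p id).det := by
  have h1 : (Aᵀ * A).det = ∑ σ : Perm (Fin m), (Perm.sign σ : ℤ) *
      ∑ p ∈ Fintype.piFinset (fun _ : Fin m => (univ : Finset (Fin L))),
        ∏ i, (A (p i) (σ i) * A (p i) i) := by
    simp only [Matrix.det_apply', Matrix.mul_apply, Matrix.transpose_apply, prod_univ_sum]
  rw [h1]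
  simp only [Finset.mul_sum, Fintype.piFinset_univ]
  rw [Finset.sum_comm]
  refine Finset.sum_congr rfl fun p _ => ?_
  have h2 : (A.submatrix p id).det = ((A.submatrix p id)ᵀ).det := (Matrix.det_transpose _).symm
  rw [h2, Matrix.det_apply', Finset.mul_sum]
  refine Finset.sum_congr rfl fun σ _ => ?_
  simp only [Matrix.transpose_apply, Matrix.submatrix_apply, id_eq]
  rw [Finset.prod_mul_distrib]
  ring

lemma gram_vandermonde {L : ℕ} (m : ℕ) (δ : Fin L → ℝ) :
    (((Matrix.of fun (l : Fin L) (j : Fin m) => δ l ^ (j : ℕ)))ᵀ *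
      (Matrix.of fun (l : Fin L) (j : Fin m) => δ l ^ (j : ℕ))).det =
    ∑ C ∈ (univ : Finset (Fin L)).powersetCard m,
      ∏ p ∈ C.offDiag.filter (fun p : Fin L × Fin L => p.1 < p.2), (δ p.2 - δ p.1) ^ 2 := by
  classical
  set A : Matrix (Fin L) (Fin m) ℝ := Matrix.of fun l j => δ l ^ (j : ℕ) with hA
  rw [gram_expand]
  -- restrict to injective maps
  have step1 : ∑ p : Fin m → Fin L, (∏ i, A (p i) i) * (A.submatrix p id).det =
      ∑ p ∈ univ.filter (fun p : Fin m → Fin L => Function.Injective p),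
        (∏ i, A (p i) i) * (A.submatrix p id).det := by
    symm
    apply Finset.sum_subset (Finset.filter_subset _ _)
    intro p _ hp
    simp only [Finset.mem_filter, Finset.mem_univ, true_and] at hp
    rw [Function.not_injective_iff] at hp
    obtain ⟨i, j, hij, hne⟩ := hp
    have : (A.submatrix p id).det = 0 := by
      apply Matrix.det_zero_of_row_eq hne
      ext c
      simp [Matrix.submatrix_apply, hij]
    rw [this, mul_zero]
  rw [step1]
  -- group by image
  have step2 : ∑ x ∈ ((univ : Finset (Fin L)).powersetCard m).sigma
        (fun _ => (univ : Finset (Perm (Fin m)))),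
      (if h : x.1.card = m then
        (∏ i, A (x.1.orderEmbOfFin h (x.2 i)) i) *
          (((Perm.sign x.2 : ℤ) : ℝ) * (A.submatrix (⇑(x.1.orderEmbOfFin h)) id).det)
      else 0) =
      ∑ p ∈ univ.filter (fun p : Fin m → Fin L => Function.Injective p),
        (∏ i, A (p i) i) * (A.submatrix p id).det := by
    refine Finset.sum_bij
      (fun x hx => (⇑(x.1.orderEmbOfFin (Finset.mem_powersetCard_univ.mp
        (Finset.mem_sigma.mp hx).1))) ∘ ⇑x.2) ?_ ?_ ?_ ?_
    · intro x hx
      simp only [Finset.mem_filter, Finset.mem_univ, true_and]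
      exact (x.1.orderEmbOfFin _).injective.comp x.2.injective
    · intro x hx y hy hxy
      have hcx := Finset.mem_powersetCard_univ.mp (Finset.mem_sigma.mp hx).1
      have hcy := Finset.mem_powersetCard_univ.mp (Finset.mem_sigma.mp hy).1
      have hrange : (x.1 : Set (Fin L)) = (y.1 : Set (Fin L)) := by
        rw [← Finset.range_orderEmbOfFin x.1 hcx, ← Finset.range_orderEmbOfFin y.1 hcy]
        rw [← x.2.surjective.range_comp ⇑(x.1.orderEmbOfFin hcx),
          ← y.2.surjective.range_comp ⇑(y.1.orderEmbOfFin hcy)]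
        exact congrArg Set.range hxy
      have h1 : x.1 = y.1 := Finset.coe_injective hrange
      obtain ⟨s, σ⟩ := x
      obtain ⟨t, τ⟩ := y
      cases h1
      simp only [Sigma.mk.inj_iff, heq_eq_eq, true_and]
      ext i
      have := congrFun hxy i
      simp only [Function.comp_apply] at this
      exact Fin.val_injective (congrArg Fin.val ((s.orderEmbOfFin hcx).injective this)) |>.symm ▸ rfl
    · intro p hp
      simp only [Finset.mem_filter, Finset.mem_univ, true_and] at hp
      have h : (Finset.image p univ).card = m := by
        rw [Finset.card_image_of_injective _ hp, Finset.card_univ, Fintype.card_fin]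
      have hr : Set.range p = ((Finset.image p univ : Finset (Fin L)) : Set (Fin L)) := by
        ext x; simp
      let q : Fin m ≃ {x // x ∈ (Finset.image p univ : Finset (Fin L))} :=
        (Equiv.ofInjective p hp).trans (Equiv.setCongr hr)
      refine ⟨⟨Finset.image p univ, q.trans ((Finset.image p univ).orderIsoOfFin h).toEquiv.symm⟩,
        Finset.mem_sigma.mpr ⟨Finset.mem_powersetCard_univ.mpr h, Finset.mem_univ _⟩, ?_⟩
      funext i
      simp only [Function.comp_apply, Equiv.trans_apply]
      have heq : ((Finset.image p univ).orderIsoOfFin h)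
          (((Finset.image p univ).orderIsoOfFin h).toEquiv.symm (q i)) = q i := by
        simp
      calc ((Finset.image p univ).orderEmbOfFin h)
            (((Finset.image p univ).orderIsoOfFin h).toEquiv.symm (q i))
          = (((Finset.image p univ).orderIsoOfFin h)
              (((Finset.image p univ).orderIsoOfFin h).toEquiv.symm (q i)) : Fin L) := by
            rw [Finset.coe_orderIsoOfFin_apply]
        _ = ((q i : Fin L)) := by rw [heq]
        _ = p i := rfl
    · intro x hx
      have hc := Finset.mem_powersetCard_univ.mp (Finset.mem_sigma.mp hx).1
      rw [dif_pos hc]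
      have hsub : A.submatrix (⇑(x.1.orderEmbOfFin hc) ∘ ⇑x.2) id
          = (A.submatrix (⇑(x.1.orderEmbOfFin hc)) id).submatrix (⇑x.2) id := by
        rw [Matrix.submatrix_submatrix]; rfl
      rw [hsub, Matrix.det_permute]
      simp only [Function.comp_apply]
  rw [← step2, Finset.sum_sigma]
  refine Finset.sum_congr rfl fun C hC => ?_
  have hc := Finset.mem_powersetCard_univ.mp hC
  simp only [dif_pos hc]
  -- inner permutation sum
  have hdet : (A.submatrix (⇑(C.orderEmbOfFin hc)) id).det = ∑ σ : Perm (Fin m),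
      ((Perm.sign σ : ℤ) : ℝ) * ∏ i, A (C.orderEmbOfFin hc (σ i)) i := by
    rw [Matrix.det_apply']
    rfl
  have inner : ∑ σ : Perm (Fin m), (∏ i, A (C.orderEmbOfFin hc (σ i)) i) *
        (((Perm.sign σ : ℤ) : ℝ) * (A.submatrix (⇑(C.orderEmbOfFin hc)) id).det) =
      ((A.submatrix (⇑(C.orderEmbOfFin hc)) id).det) ^ 2 := by
    calc ∑ σ : Perm (Fin m), (∏ i, A (C.orderEmbOfFin hc (σ i)) i) *
          (((Perm.sign σ : ℤ) : ℝ) * (A.submatrix (⇑(C.orderEmbOfFin hc)) id).det)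
        = (∑ σ : Perm (Fin m), ((Perm.sign σ : ℤ) : ℝ) * ∏ i, A (C.orderEmbOfFin hc (σ i)) i) *
            (A.submatrix (⇑(C.orderEmbOfFin hc)) id).det := by
          rw [Finset.sum_mul]; exact Finset.sum_congr rfl fun σ _ => by ring
      _ = _ := by rw [← hdet]; ring
  rw [inner]
  -- vandermonde determinant squared
  have hv : A.submatrix (⇑(C.orderEmbOfFin hc)) id
      = Matrix.vandermonde (δ ∘ ⇑(C.orderEmbOfFin hc)) := by
    ext i j; simp [hA, Matrix.vandermonde_apply]
  rw [hv, Matrix.det_vandermonde]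
  rw [← Finset.prod_pow]
  simp_rw [← Finset.prod_pow]
  simp only [Function.comp_apply]
  rw [Finset.prod_sigma' univ (fun i => Ioi i)
    (fun i j => (δ ((C.orderEmbOfFin hc) j) - δ ((C.orderEmbOfFin hc) i)) ^ 2)]
  refine Finset.prod_nbij (fun x => ((C.orderEmbOfFin hc) x.1, (C.orderEmbOfFin hc) x.2)) ?_ ?_ ?_ ?_
  · intro x hx
    simp only [Finset.mem_sigma, Finset.mem_univ, Finset.mem_Ioi, true_and] at hx
    simp only [Finset.mem_filter, Finset.mem_offDiag]
    refine ⟨⟨Finset.orderEmbOfFin_mem _ _ _, Finset.orderEmbOfFin_mem _ _ _, ?_⟩, ?_⟩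
    · exact ne_of_lt ((C.orderEmbOfFin hc).strictMono hx)
    · exact (C.orderEmbOfFin hc).strictMono hx
  · intro x hx y hy hxy
    simp only [Prod.mk.injEq] at hxy
    have h1 := (C.orderEmbOfFin hc).injective hxy.1
    have h2 := (C.orderEmbOfFin hc).injective hxy.2
    obtain ⟨a,b⟩ := x; obtain ⟨c,d⟩ := y
    simp only at h1 h2
    subst h1; subst h2; rfl
  · intro p hp
    simp only [Finset.coe_filter, Finset.mem_offDiag, Set.mem_setOf_eq, Finset.mem_coe] at hp
    obtain ⟨⟨h1, h2, _⟩, hlt⟩ := hp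
    have hr := Finset.range_orderEmbOfFin C hc
    obtain ⟨i, hi⟩ : p.1 ∈ Set.range ⇑(C.orderEmbOfFin hc) := by rw [hr]; exact h1
    obtain ⟨j, hj⟩ : p.2 ∈ Set.range ⇑(C.orderEmbOfFin hc) := by rw [hr]; exact h2
    refine ⟨⟨i, j⟩, ?_, ?_⟩
    · simp only [Finset.coe_sigma, Set.mem_sigma_iff, Finset.mem_coe, Finset.mem_Ioi]
      refine ⟨Finset.mem_univ _, ?_⟩
      have : (C.orderEmbOfFin hc) i < (C.orderEmbOfFin hc) j := by rw [hi, hj]; exact hlt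
      exact (C.orderEmbOfFin hc).lt_iff_lt.mp this
    · simp [hi, hj]
  · intro x hx
    rfl

lemma sum_fin_castLE {L m : ℕ} (h : m ≤ L) (f : Fin L → ℝ)
    (hf : ∀ l : Fin L, m ≤ (l : ℕ) → f l = 0) :
    ∑ l : Fin L, f l = ∑ t : Fin m, f (Fin.castLE h t) := by
  have : ∑ t : Fin m, f (Fin.castLE h t) = ∑ l ∈ Finset.univ.map (Fin.castLEEmb h), f l := by
    rw [Finset.sum_map]
    rfl
  rw [this]
  symm
  apply Finset.sum_subset (Finset.subset_univ _)
  intro l _ hl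
  apply hf
  by_contra hc
  push_neg at hc
  exact hl (Finset.mem_map.mpr ⟨⟨l, hc⟩, Finset.mem_univ _, rfl⟩)

lemma gram_tri {L K : ℕ} (hKL : K ≤ L) (δ : Fin L → ℝ)
    (Q : Matrix (Fin L) (Fin L) ℝ) (R : Matrix (Fin L) (Fin K) ℝ)
    (hQ : Qᵀ * Q = 1)
    (hR : ∀ (i : Fin L) (j : Fin K), (j : ℕ) < (i : ℕ) → R i j = 0)
    (hQR : ∀ (l : Fin L) (c : Fin K), (Q * R) l c = δ l ^ (c : ℕ))
    (m : ℕ) (hm : m ≤ K) :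
    (((Matrix.of fun (l : Fin L) (j : Fin m) => δ l ^ (j : ℕ)))ᵀ *
      (Matrix.of fun (l : Fin L) (j : Fin m) => δ l ^ (j : ℕ))).det =
    (∏ i ∈ Finset.range m,
      (if h : i < K then R ⟨i, by omega⟩ ⟨i, h⟩ else 0)) ^ 2 := by
  set A : Matrix (Fin L) (Fin m) ℝ := Matrix.of fun l j => δ l ^ (j : ℕ) with hA
  set Rm : Matrix (Fin L) (Fin m) ℝ := R.submatrix id (Fin.castLE hm) with hRm
  have hAQR : A = Q * Rm := by
    ext l j
    have : (Q * Rm) l j = (Q * R) l (Fin.castLE hm j) := by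
      simp [Matrix.mul_apply, hRm]
    rw [this, hQR]
    rfl
  have hGram : Aᵀ * A = Rmᵀ * Rm := by
    rw [hAQR, Matrix.transpose_mul, Matrix.mul_assoc, ← Matrix.mul_assoc Qᵀ Q Rm, hQ,
      Matrix.one_mul]
  set B : Matrix (Fin m) (Fin m) ℝ :=
    R.submatrix (Fin.castLE (hm.trans hKL)) (Fin.castLE hm) with hB
  have hRB : Rmᵀ * Rm = Bᵀ * B := by
    ext i j
    simp only [Matrix.mul_apply, Matrix.transpose_apply, Matrix.submatrix_apply, id_eq, hRm, hB]
    apply sum_fin_castLE (hm.trans hKL)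
      (fun l => R l (Fin.castLE hm i) * R l (Fin.castLE hm j))
    intro l hl
    have : (Fin.castLE hm i : ℕ) < (l : ℕ) := by
      have := i.2
      simp only [Fin.coe_castLE]
      omega
    rw [hR l _ this, zero_mul]
  have hTri : B.BlockTriangular id := by
    intro i j hij
    apply hR
    simpa using hij
  rw [hGram, hRB, Matrix.det_mul, Matrix.det_transpose, ← sq,
    Matrix.det_of_upperTriangular hTri]
  congr 1
  rw [← Fin.prod_univ_eq_prod_range
    (fun i => if h : i < K then R ⟨i, by omega⟩ ⟨i, h⟩ else 0) m]
  refine Finset.prod_congr rfl fun i _ => ?_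
  rw [dif_pos (show (i : ℕ) < K by omega)]
  rfl

/-- Ratio identity for the diagonal entries of `R` in a QR factorization of a rectangular
Vandermonde matrix. -/
theorem stmt_3 (L K : ℕ) (hKL : K ≤ L) (δ : Fin L → ℝ)
    (D : Matrix (Fin L) (Fin K) ℝ) (hD : ∀ l j, D l j = δ l ^ (j : ℕ))
    (Q : Matrix (Fin L) (Fin L) ℝ) (R : Matrix (Fin L) (Fin K) ℝ)
    (hQ : Q.transpose * Q = 1)
    (hR : ∀ (i : Fin L) (j : Fin K), (j : ℕ) < (i : ℕ) → R i j = 0)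
    (hQR : D = Q * R)
    (k : ℕ) (hk1 : 1 < k) (hkK : k ≤ K)
    (Dk : Matrix (Fin L) (Fin k) ℝ) (hDk : ∀ l j, Dk l j = δ l ^ (j : ℕ))
    (Dk' : Matrix (Fin L) (Fin (k - 1)) ℝ) (hDk' : ∀ l j, Dk' l j = δ l ^ (j : ℕ)) :
    (R ⟨k - 1, by omega⟩ ⟨k - 1, by omega⟩) ^ 2 * (Dk'.transpose * Dk').det =
        (Dk.transpose * Dk).det ∧
      ((Dk'.transpose * Dk').det ≠ 0 →
        (R ⟨k - 1, by omega⟩ ⟨k - 1, by omega⟩) ^ 2 =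
          (∑ C ∈ Finset.univ.powersetCard k,
              ∏ p ∈ C.offDiag.filter (fun p : Fin L × Fin L => p.1 < p.2),
                (δ p.2 - δ p.1) ^ 2) /
            (∑ C ∈ Finset.univ.powersetCard (k - 1),
              ∏ p ∈ C.offDiag.filter (fun p : Fin L × Fin L => p.1 < p.2),
                (δ p.2 - δ p.1) ^ 2)) := by
  have hQR' : ∀ (l : Fin L) (c : Fin K), (Q * R) l c = δ l ^ (c : ℕ) := by
    intro l c; rw [← hQR]; exact hD l c
  have hDkE : Dk = Matrix.of (fun (l : Fin L) (j : Fin k) => δ l ^ (j : ℕ)) := by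
    ext l j; exact hDk l j
  have hDk'E : Dk' = Matrix.of (fun (l : Fin L) (j : Fin (k - 1)) => δ l ^ (j : ℕ)) := by
    ext l j; exact hDk' l j
  have t1 := gram_tri hKL δ Q R hQ hR hQR' k hkK
  have t2 := gram_tri hKL δ Q R hQ hR hQR' (k - 1) (by omega)
  have v1 := gram_vandermonde (L := L) k δ
  have v2 := gram_vandermonde (L := L) (k - 1) δ
  have hsplit : ∏ i ∈ Finset.range k,
      (if h : i < K then R ⟨i, by omega⟩ ⟨i, h⟩ else 0) =
      (∏ i ∈ Finset.range (k - 1),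
        (if h : i < K then R ⟨i, by omega⟩ ⟨i, h⟩ else 0)) *
        R ⟨k - 1, by omega⟩ ⟨k - 1, by omega⟩ := by
    rw [show Finset.range k = Finset.range ((k - 1) + 1) from by rw [Nat.sub_add_cancel (by omega)],
      Finset.prod_range_succ, dif_pos (show k - 1 < K by omega)]
  have part1 : (R ⟨k - 1, by omega⟩ ⟨k - 1, by omega⟩) ^ 2 * (Dk'.transpose * Dk').det =
      (Dk.transpose * Dk).det := by
    rw [hDkE, hDk'E]
    show (R ⟨k - 1, by omega⟩ ⟨k - 1, by omega⟩) ^ 2 *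
      ((Matrix.of fun (l : Fin L) (j : Fin (k-1)) => δ l ^ (j : ℕ))ᵀ *
        (Matrix.of fun (l : Fin L) (j : Fin (k-1)) => δ l ^ (j : ℕ))).det = _
    rw [t1, t2, hsplit]
    ring
  refine ⟨part1, fun hne => ?_⟩
  have hS2 : (Dk'.transpose * Dk').det =
      ∑ C ∈ Finset.univ.powersetCard (k - 1),
        ∏ p ∈ C.offDiag.filter (fun p : Fin L × Fin L => p.1 < p.2), (δ p.2 - δ p.1) ^ 2 := by
    rw [hDk'E]; exact v2
  have hS1 : (Dk.transpose * Dk).det =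
      ∑ C ∈ Finset.univ.powersetCard k,
        ∏ p ∈ C.offDiag.filter (fun p : Fin L × Fin L => p.1 < p.2), (δ p.2 - δ p.1) ^ 2 := by
    rw [hDkE]; exact v1
  rw [eq_div_iff (by rw [← hS2]; exact hne)]
  rw [← hS1, ← hS2]
  exact part1
end

section
/- Upper bound on the generalized Vandermonde objective: let μ_1,...,μ_K be distinct reals with the property that Σ_{k=1}^{K} L_k(x)² ≤ 1 for all x ∈ [−1,1], where L_k are the Lagrange basis polynomials at μ. Then for any δ_1,...,δ_L ∈ [−1,1], Σ over K-subsets C of {1,...,L} of ∏_{i<j∈C}(δ_j − δ_i)² ≤ [∏_{i<j}(μ_j − μ_i)]² · (L/K)^K. -/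
/-!
Let `D` be the `L × K` matrix `(δ_l ^ j)`. By Cauchy–Binet the left-hand side is `det (Dᵀ D)`,
the sum of the squared Vandermonde minors of `D`. Expanding the monomials in the Lagrange basis at
`μ` factors `D = Ψ Z` with `Ψ l k = L_k (δ_l)` and `Z` the Vandermonde matrix of `μ`, so
`det (Dᵀ D) = det Z ^ 2 * det (Ψᵀ Ψ)`. The hypothesis says that every row of `Ψ` has squared norm
at most `1`, hence `trace (Ψᵀ Ψ) ≤ L`, and AM–GM on the eigenvalues of the positive semidefinite
matrix `Ψᵀ Ψ` gives `det (Ψᵀ Ψ) ≤ (L / K) ^ K`.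
-/

open Finset Matrix Equiv Function

theorem Real.prod_le_pow_sum_div_card {ι : Type*} (s : Finset ι) (z : ι → ℝ)
    (hz : ∀ i ∈ s, 0 ≤ z i) : ∏ i ∈ s, z i ≤ ((∑ i ∈ s, z i) / #s) ^ #s := by
  rcases s.eq_empty_or_nonempty with rfl | hs
  · simp
  have hcard : (0 : ℝ) < #s := by exact_mod_cast hs.card_pos
  have hprod : 0 ≤ ∏ i ∈ s, z i := prod_nonneg hz
  have amgm := Real.geom_mean_le_arith_mean s (fun _ ↦ 1) z (fun _ _ ↦ zero_le_one)
    (by simpa using hs.card_pos) hz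
  simp only [Real.rpow_one, one_mul, sum_const, nsmul_eq_mul, mul_one] at amgm
  calc ∏ i ∈ s, z i = ((∏ i ∈ s, z i) ^ (#s : ℝ)⁻¹) ^ #s := by
        rw [← Real.rpow_natCast, ← Real.rpow_mul hprod, inv_mul_cancel₀ hcard.ne', Real.rpow_one]
    _ ≤ _ := by gcongr

theorem Tuple.sum_injective_eq_sum_strictMono_perm {ι M : Type*} [Fintype ι] [LinearOrder ι]
    [AddCommMonoid M] {K : ℕ} (φ : (Fin K → ι) → M) :
    ∑ g : Fin K → ι with Injective g, φ g =
      ∑ f : Fin K → ι with StrictMono f, ∑ σ : Perm (Fin K), φ (f ∘ σ) := by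
  rw [← sum_product']
  refine sum_nbij' (fun g ↦ (g ∘ sort g, (sort g)⁻¹)) (fun p ↦ p.1 ∘ p.2) ?_ ?_ ?_ ?_ ?_
  · intro g hg
    simp only [mem_filter, mem_univ, true_and, mem_product, and_true] at hg ⊢
    exact (monotone_sort g).strictMono_of_injective (hg.comp (sort g).injective)
  · rintro ⟨f, σ⟩ hf
    simp only [mem_product, mem_filter, mem_univ, true_and, and_true] at hf
    simpa using hf.injective.comp σ.injective
  · intro g _
    simp [comp_assoc]
  · rintro ⟨f, σ⟩ hf
    simp only [mem_product, mem_filter, mem_univ, true_and, and_true] at hf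
    have hsorted : (f ∘ σ) ∘ sort (f ∘ σ) = f := by
      rw [comp_perm_comp_sort_eq_comp_sort, sort_eq_refl_iff_monotone.mpr hf.monotone]
      rfl
    have hσ : σ * sort (f ∘ σ) = 1 := by
      ext i
      simpa using congrArg Fin.val (hf.injective (congrFun hsorted i))
    exact Prod.ext hsorted (inv_eq_of_mul_eq_one_left hσ)
  · intro g _
    simp [comp_assoc]

theorem Finset.sum_powersetCard_eq_sum_strictMono {ι M : Type*} [Fintype ι] [LinearOrder ι]
    [DecidableEq ι] [AddCommMonoid M] (K : ℕ) (φ : Finset ι → M) :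
    ∑ C ∈ univ.powersetCard K, φ C = ∑ f : Fin K → ι with StrictMono f, φ (univ.image f) := by
  symm
  refine sum_bij' (fun f _ ↦ univ.image f)
    (fun C hC ↦ C.orderEmbOfFin (mem_powersetCard_univ.mp hC)) ?_ ?_ ?_ ?_ ?_
  · intro f hf
    simp only [mem_filter, mem_univ, true_and] at hf
    simp [card_image_of_injective _ hf.injective]
  · intro C hC
    simpa using (C.orderEmbOfFin _).strictMono
  · intro f hf
    simp only [mem_filter, mem_univ, true_and] at hf
    exact (orderEmbOfFin_unique _ (fun i ↦ mem_image_of_mem f (mem_univ i)) hf).symm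
  · intro C _
    convert image_orderEmbOfFin_univ C _
  · intro f _
    rfl

theorem StrictMono.prod_offDiag_image_lt {ι M : Type*} [LinearOrder ι] [DecidableEq ι]
    [CommMonoid M] {K : ℕ} {f : Fin K → ι} (hf : StrictMono f) (g : ι → ι → M) :
    ∏ p ∈ (univ.image f).offDiag with p.1 < p.2, g p.1 p.2 =
      ∏ i, ∏ j ∈ Ioi i, g (f i) (f j) := by
  have hpairs : (univ.image f).offDiag.filter (fun p ↦ p.1 < p.2) =
      (univ.filter fun p : Fin K × Fin K ↦ p.1 < p.2).image (Prod.map f f) := by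
    ext ⟨a, b⟩
    simp only [mem_filter, mem_offDiag, mem_image, mem_univ, true_and, Prod.exists,
      Prod.map_apply, Prod.mk.injEq]
    constructor
    · rintro ⟨⟨⟨i, rfl⟩, ⟨j, rfl⟩, -⟩, hij⟩
      exact ⟨i, j, hf.lt_iff_lt.mp hij, rfl, rfl⟩
    · rintro ⟨i, j, hij, rfl, rfl⟩
      exact ⟨⟨⟨i, rfl⟩, ⟨j, rfl⟩, (hf hij).ne⟩, hf hij⟩
  rw [hpairs, prod_image fun p _ q _ h ↦ hf.injective.prodMap hf.injective h]
  exact prod_finset_product' (univ.filter fun p : Fin K × Fin K ↦ p.1 < p.2) univ Ioi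
    (f := fun i j ↦ g (f i) (f j)) (by simp)

theorem Lagrange.eval_basis {F ι : Type*} [Field F] [DecidableEq ι] (s : Finset ι) (v : ι → F)
    (i : ι) (x : F) : (Lagrange.basis s v i).eval x = ∏ j ∈ s.erase i, (x - v j) / (v i - v j) := by
  simp only [Lagrange.basis, Lagrange.basisDivisor, Polynomial.eval_prod, Polynomial.eval_mul,
    Polynomial.eval_C, Polynomial.eval_sub, Polynomial.eval_X, div_eq_inv_mul]

namespace Matrix

variable {R : Type*} [CommRing R]

theorem det_mul_eq_sum_prod_mul_det_submatrix {m ι : Type*} [Fintype m] [DecidableEq m]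
    [Fintype ι] (A : Matrix m ι R) (B : Matrix ι m R) :
    det (A * B) = ∑ g : m → ι, (∏ i, B (g i) i) * det (A.submatrix id g) := by
  simp only [det_apply', mul_apply, prod_univ_sum, mul_sum, Fintype.piFinset_univ,
    submatrix_apply, id_eq]
  rw [sum_comm]
  refine sum_congr rfl fun g _ ↦ sum_congr rfl fun σ _ ↦ ?_
  rw [prod_mul_distrib]
  ring

theorem det_mul_eq_sum_injective {m ι : Type*} [Fintype m] [DecidableEq m]
    [Fintype ι] [DecidableEq ι] (A : Matrix m ι R) (B : Matrix ι m R) :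
    det (A * B) = ∑ g : m → ι with Injective g, (∏ i, B (g i) i) * det (A.submatrix id g) := by
  rw [det_mul_eq_sum_prod_mul_det_submatrix, sum_filter_of_ne]
  intro g _ hg
  by_contra hinj
  obtain ⟨i, j, hgij, hij⟩ : ∃ i j, g i = g j ∧ i ≠ j := by
    simpa [Injective] using hinj
  exact hg (by rw [det_zero_of_column_eq hij fun k ↦ by simp [hgij], mul_zero])

/-- The Cauchy–Binet formula. -/
theorem det_mul_eq_sum_strictMono {ι : Type*} [Fintype ι] [LinearOrder ι] {K : ℕ}
    (A : Matrix (Fin K) ι R) (B : Matrix ι (Fin K) R) :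
    det (A * B) =
      ∑ f : Fin K → ι with StrictMono f, det (A.submatrix id f) * det (B.submatrix f id) := by
  rw [det_mul_eq_sum_injective, Tuple.sum_injective_eq_sum_strictMono_perm]
  refine sum_congr rfl fun f _ ↦ ?_
  have hperm (σ : Perm (Fin K)) :
      det (A.submatrix id (f ∘ σ)) = Perm.sign σ * det (A.submatrix id f) :=
    det_permute' σ (A.submatrix id f)
  simp only [hperm, det_apply' (B.submatrix f id), submatrix_apply, id_eq, mul_sum]
  exact sum_congr rfl fun σ _ ↦ by change (∏ i, B (f (σ i)) i) * _ = _; ring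

theorem of_pow_eq_lagrange_mul_vandermonde {F ι : Type*} [Field F] {K : ℕ} {μ : Fin K → F}
    (hμ : Injective μ) (δ : ι → F) :
    of (fun l (j : Fin K) ↦ δ l ^ (j : ℕ)) =
      of (fun l k ↦ (Lagrange.basis univ μ k).eval (δ l)) * vandermonde μ := by
  ext l j
  have hdeg : (Polynomial.X ^ (j : ℕ) : Polynomial F).degree < #(univ : Finset (Fin K)) := by
    simp [j.2]
  have := congrArg (Polynomial.eval (δ l)) (Lagrange.eq_interpolate hμ.injOn hdeg)
  simp only [Polynomial.eval_pow, Polynomial.eval_X, Lagrange.interpolate_apply,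
    Polynomial.eval_finsetSum, Polynomial.eval_mul, Polynomial.eval_C] at this
  simp only [of_apply, mul_apply, vandermonde_apply, this, mul_comm]

theorem det_transpose_mul_self_mul {n ι : Type*} [Fintype n] [DecidableEq n] [Fintype ι]
    (Ψ : Matrix ι n R) (Z : Matrix n n R) :
    det ((Ψ * Z)ᵀ * (Ψ * Z)) = det Z ^ 2 * det (Ψᵀ * Ψ) := by
  rw [transpose_mul, Matrix.mul_assoc, ← Matrix.mul_assoc Ψᵀ, ← Matrix.mul_assoc, det_mul,
    det_mul, det_transpose]
  ring

theorem det_transpose_mul_self_powers {ι : Type*} [Fintype ι] [LinearOrder ι] {K : ℕ}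
    (δ : ι → R) :
    det ((of fun l (j : Fin K) ↦ δ l ^ (j : ℕ))ᵀ * of fun l (j : Fin K) ↦ δ l ^ (j : ℕ)) =
      ∑ f : Fin K → ι with StrictMono f, ∏ i, ∏ j ∈ Ioi i, (δ (f j) - δ (f i)) ^ 2 := by
  rw [det_mul_eq_sum_strictMono]
  refine sum_congr rfl fun f _ ↦ ?_
  have hminor : (of fun l (j : Fin K) ↦ δ l ^ (j : ℕ)).submatrix f id =
      vandermonde fun i ↦ δ (f i) := rfl
  rw [← transpose_submatrix, det_transpose, hminor, det_vandermonde, ← sq]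
  simp only [prod_pow]

theorem PosSemidef.det_le_trace_div_card_pow {n : Type*} [Fintype n] [DecidableEq n]
    {A : Matrix n n ℝ} (hA : A.PosSemidef) :
    A.det ≤ (A.trace / Fintype.card n) ^ Fintype.card n := by
  rw [hA.isHermitian.det_eq_prod_eigenvalues, hA.isHermitian.trace_eq_sum_eigenvalues]
  simpa using Real.prod_le_pow_sum_div_card univ _ fun i _ ↦ hA.eigenvalues_nonneg i

theorem det_transpose_mul_self_le_of_sum_sq_le_one {ι n : Type*} [Fintype ι] [Fintype n]
    [DecidableEq n] (Ψ : Matrix ι n ℝ) (hΨ : ∀ l, ∑ k, Ψ l k ^ 2 ≤ 1) :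
    det (Ψᵀ * Ψ) ≤ ((Fintype.card ι : ℝ) / Fintype.card n) ^ Fintype.card n := by
  have hPSD : (Ψᵀ * Ψ).PosSemidef := posSemidef_conjTranspose_mul_self Ψ
  have htrace : (Ψᵀ * Ψ).trace ≤ Fintype.card ι :=
    calc (Ψᵀ * Ψ).trace = ∑ l, ∑ k, Ψ l k ^ 2 := by
          simp only [trace, diag_apply, mul_apply, transpose_apply, sq]
          exact sum_comm
      _ ≤ ∑ _l : ι, (1 : ℝ) := sum_le_sum fun l _ ↦ hΨ l
      _ = Fintype.card ι := by simp
  refine hPSD.det_le_trace_div_card_pow.trans ?_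
  gcongr
  exact div_nonneg hPSD.trace_nonneg (Nat.cast_nonneg _)

end Matrix

theorem stmt_10_general (L K : ℕ)
    (μ : Fin K → ℝ) (hμ : Function.Injective μ)
    (hmaj : ∀ x ∈ Set.Icc (-1 : ℝ) 1,
      (∑ k : Fin K, (∏ i ∈ Finset.univ.erase k, (x - μ i) / (μ k - μ i)) ^ 2) ≤ 1)
    (δ : Fin L → ℝ) (hδ : ∀ l, δ l ∈ Set.Icc (-1 : ℝ) 1) :
    (∑ C ∈ Finset.univ.powersetCard K,
        ∏ p ∈ C.offDiag.filter (fun p : Fin L × Fin L => p.1 < p.2),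
          (δ p.2 - δ p.1) ^ 2) ≤
      (∏ i : Fin K, ∏ j ∈ Finset.Ioi i, (μ j - μ i)) ^ 2 * ((L : ℝ) / K) ^ K := by
  set Ψ : Matrix (Fin L) (Fin K) ℝ := of fun l k ↦ (Lagrange.basis univ μ k).eval (δ l)
  have hΨ (l : Fin L) : ∑ k, Ψ l k ^ 2 ≤ 1 := by
    simpa only [Ψ, of_apply, Lagrange.eval_basis] using hmaj (δ l) (hδ l)
  have hgram : (∑ C ∈ univ.powersetCard K,
      ∏ p ∈ C.offDiag.filter (fun p : Fin L × Fin L => p.1 < p.2), (δ p.2 - δ p.1) ^ 2) =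
        det (vandermonde μ) ^ 2 * det (Ψᵀ * Ψ) := by
    rw [← det_transpose_mul_self_mul, ← of_pow_eq_lagrange_mul_vandermonde hμ,
      det_transpose_mul_self_powers, sum_powersetCard_eq_sum_strictMono]
    refine sum_congr rfl fun f hf ↦ ?_
    exact (mem_filter.mp hf).2.prod_offDiag_image_lt fun a b ↦ (δ b - δ a) ^ 2
  rw [hgram, ← det_vandermonde]
  gcongr
  simpa using Ψ.det_transpose_mul_self_le_of_sum_sq_le_one hΨ

/-- Upper bound on the generalized Vandermonde objective via Fekete-type nodes. -/
theorem stmt_10 (L K : ℕ) (hK : 0 < K) (hKL : K ≤ L)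
    (μ : Fin K → ℝ) (hμ : Function.Injective μ)
    (hmaj : ∀ x ∈ Set.Icc (-1 : ℝ) 1,
      (∑ k : Fin K, (∏ i ∈ Finset.univ.erase k, (x - μ i) / (μ k - μ i)) ^ 2) ≤ 1)
    (δ : Fin L → ℝ) (hδ : ∀ l, δ l ∈ Set.Icc (-1 : ℝ) 1) :
    (∑ C ∈ Finset.univ.powersetCard K,
        ∏ p ∈ C.offDiag.filter (fun p : Fin L × Fin L => p.1 < p.2),
          (δ p.2 - δ p.1) ^ 2) ≤
      (∏ i : Fin K, ∏ j ∈ Finset.Ioi i, (μ j - μ i)) ^ 2 * ((L : ℝ) / K) ^ K :=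
  stmt_10_general L K μ hμ hmaj δ hδ
end
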